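/- arXiv:1905.02834 — 4 statements merged into one kernel-verified Lean document; each statement's English description precedes it below -/
import Mathlib

section
/- If U(n) is not cyclic but contains an element of order φ(n)/2, then U(n) is isomorphic to (ℤ/n₁ℤ) × (ℤ/n₂ℤ) for some positive integers n₁, n₂ with gcd(n₁, n₂) = 2. -/
/-!
Let `G` be a finite abelian group of order `2m` with an element `x` of order `m`. The exponent of
`G` is a multiple of `m` dividing `2m`, and it is not `2m` because `G` is not cyclic; so it is `m`,
which is even because `G` has an element of order `2`. For `g ∉ ⟨x⟩` we have `g² = xᵏ`, and
`gᵐ = 1` forces `k = 2j`; then `y = g x⁻ʲ` has order `2` and lies outside `⟨x⟩`, so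
`G = ⟨x⟩ × ⟨y⟩ ≅ ℤ/m × ℤ/2` with `gcd(m, 2) = 2`. For `G = U(n)` the order `φ(n)` is even, since
`U(n)` is cyclic when `n ≤ 2`.
-/

open Subgroup

namespace Subgroup.IsComplement'

variable {G : Type*} [CommGroup G] {H K : Subgroup G}

noncomputable def prodMulEquiv (h : H.IsComplement' K) : H × K ≃* G :=
  MulEquiv.ofBijective (H.subtype.coprod K.subtype) h

end Subgroup.IsComplement'

section HalfCardOrder

variable {G : Type*} [CommGroup G] [Finite G] {x : G}

theorem exponent_eq_orderOf_of_card_eq_two_mul (hG : ¬IsCyclic G)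
    (hx : Nat.card G = 2 * orderOf x) : Monoid.exponent G = orderOf x := by
  obtain ⟨k, hk⟩ := Monoid.order_dvd_exponent x
  have hk2 : k ∣ 2 := by
    refine Nat.dvd_of_mul_dvd_mul_left (orderOf_pos x) ?_
    rw [← hk, mul_comm, ← hx]
    exact Group.exponent_dvd_nat_card
  rcases (Nat.dvd_prime Nat.prime_two).mp hk2 with rfl | rfl
  · rw [hk, mul_one]
  · exact absurd (IsCyclic.of_exponent_eq_card (by rw [hk, hx, mul_comm])) hG

theorem even_orderOf_of_card_eq_two_mul (hG : ¬IsCyclic G)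
    (hx : Nat.card G = 2 * orderOf x) : Even (orderOf x) := by
  obtain ⟨t, ht⟩ := exists_prime_orderOf_dvd_card' 2 (hx ▸ dvd_mul_right 2 _)
  rw [even_iff_two_dvd, ← exponent_eq_orderOf_of_card_eq_two_mul hG hx, ← ht]
  exact Monoid.order_dvd_exponent t

theorem exists_orderOf_eq_two_notMem_zpowers (hG : ¬IsCyclic G)
    (hx : Nat.card G = 2 * orderOf x) : ∃ y : G, orderOf y = 2 ∧ y ∉ zpowers x := by
  have hindex : (zpowers x).index = 2 := by
    refine Nat.eq_of_mul_eq_mul_left (orderOf_pos x) ?_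
    rw [← mul_comm 2, ← hx, ← card_mul_index (zpowers x), Nat.card_zpowers]
  obtain ⟨g, hg⟩ : ∃ g : G, g ∉ zpowers x := by
    by_contra! h
    have := index_eq_one.mpr ((eq_top_iff' _).mpr h)
    omega
  obtain ⟨k, hk⟩ : ∃ k : ℕ, x ^ k = g ^ 2 :=
    mem_powers_iff_mem_zpowers.mpr (hindex ▸ pow_index_mem _ g)
  obtain ⟨t, ht⟩ := (even_orderOf_of_card_eq_two_mul hG hx).two_dvd
  have ht0 : 0 < t := by have := orderOf_pos x; omega
  -- `x ^ (k * t) = g ^ (2 * t) = 1` because `2 * t` is the exponent.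
  obtain ⟨j, rfl⟩ : 2 ∣ k := by
    refine Nat.dvd_of_mul_dvd_mul_right ht0 ?_
    rw [← ht, orderOf_dvd_iff_pow_eq_one, pow_mul, hk, ← pow_mul, ← ht,
      ← exponent_eq_orderOf_of_card_eq_two_mul hG hx, Monoid.pow_exponent_eq_one]
  have hy : g * (x ^ j)⁻¹ ∉ zpowers x := fun h =>
    hg (by simpa using mul_mem h (zpow_mem (mem_zpowers x) j))
  refine ⟨g * (x ^ j)⁻¹, orderOf_eq_prime ?_ fun h => hy (h ▸ one_mem _), hy⟩
  rw [mul_pow, inv_pow, ← pow_mul, mul_comm j 2, hk, mul_inv_cancel]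

theorem isComplement'_zpowers_of_orderOf_eq_two (hx : Nat.card G = 2 * orderOf x) {y : G}
    (hy : orderOf y = 2) (hyx : y ∉ zpowers x) : (zpowers x).IsComplement' (zpowers y) := by
  refine isComplement'_of_card_mul_and_disjoint (by rw [Nat.card_zpowers, Nat.card_zpowers, hy, hx,
    mul_comm]) (disjoint_def.mpr fun {z} hzx hzy => ?_)
  obtain ⟨k, rfl⟩ := mem_powers_iff_mem_zpowers.mpr hzy
  dsimp only at hzx ⊢
  rw [← pow_mod_orderOf, hy] at hzx ⊢
  rcases Nat.mod_two_eq_zero_or_one k with hk | hk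
  · rw [hk, pow_zero]
  · rw [hk, pow_one] at hzx
    exact absurd hzx hyx

theorem nonempty_mulEquiv_zmod_prod_zmod_two (hG : ¬IsCyclic G)
    (hx : Nat.card G = 2 * orderOf x) :
    Nonempty (G ≃* Multiplicative (ZMod (orderOf x)) × Multiplicative (ZMod 2)) := by
  obtain ⟨y, hy, hyx⟩ := exists_orderOf_eq_two_notMem_zpowers hG hx
  have hcompl := isComplement'_zpowers_of_orderOf_eq_two hx hy hyx
  have card_zmod (m : ℕ) : Nat.card (Multiplicative (ZMod m)) = m :=
    (Nat.card_congr Multiplicative.toAdd).trans (Nat.card_zmod m)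
  exact ⟨hcompl.prodMulEquiv.symm.trans <| .prodCongr
    (mulEquivOfCyclicCardEq (by rw [Nat.card_zpowers, card_zmod]))
    (mulEquivOfCyclicCardEq (by rw [Nat.card_zpowers, card_zmod, hy]))⟩

end HalfCardOrder

/-- If U(n) is not cyclic but has an element of order φ(n)/2, then
U(n) ≅ (ℤ/n₁ℤ) × (ℤ/n₂ℤ) with gcd(n₁, n₂) = 2. -/
theorem stmt_7 (n : ℕ) (h1 : ¬ IsCyclic (ZMod n)ˣ)
    (h2 : ∃ x : (ZMod n)ˣ, orderOf x = Nat.totient n / 2) :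
    ∃ n₁ n₂ : ℕ, 0 < n₁ ∧ 0 < n₂ ∧ Nat.gcd n₁ n₂ = 2 ∧
      Nonempty ((ZMod n)ˣ ≃*
        (Multiplicative (ZMod n₁) × Multiplicative (ZMod n₂))) := by
  obtain ⟨x, hx⟩ := h2
  have hn : 2 < n := by
    by_contra! hn
    interval_cases n
    exacts [h1 ZMod.isCyclic_units_zero, h1 ZMod.isCyclic_units_one, h1 ZMod.isCyclic_units_two]
  have : NeZero n := ⟨by omega⟩
  have hcard : Nat.card (ZMod n)ˣ = 2 * orderOf x := by
    rw [Nat.card_eq_fintype_card, ZMod.card_units_eq_totient, hx,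
      Nat.mul_div_cancel' (Nat.totient_even hn).two_dvd]
  exact ⟨orderOf x, 2, orderOf_pos x, two_pos,
    Nat.gcd_eq_right (even_orderOf_of_card_eq_two_mul h1 hcard).two_dvd,
    nonempty_mulEquiv_zmod_prod_zmod_two h1 hcard⟩
end

section
/- For n ≥ 3, the quotient group U(n)/{±1} is cyclic if and only if U(n) contains an element of multiplicative order φ(n)/2. -/
/-!
`U(n)` has order `φ(n) = 2m` and `Q = U(n)/{±1}` has order `m`; a lift of a generator of `Q` has
a power of order `m`. Conversely let `x` have order `m`.

If `-1` is a square mod `n`, then `U(n)` itself is cyclic: `4 ∤ n`, and unless `n = p^k` or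
`2p^k` it splits as `n = ab` with coprime `a, b > 2`; then `4` divides the Carmichael
function `λ` of both `a` and `b`, so `4 λ(n) ≤ φ(n) = 2 ord x ≤ 2 λ(n)`, which is absurd.

If `-1` is not a square, either `-1 ∉ ⟨x⟩` and the image of `x` generates `Q`, or
`-1 = x^(m/2)` with `m/2` odd, and the image of `x` (of odd order `m/2`) times an element of
order `2` generates `Q`.
-/

open ArithmeticFunction Nat Subgroup

section GroupTheory

variable {G : Type*}

theorem exists_orderOf_eq_natCard_quotient [Group G] [Finite G] (N : Subgroup G) [N.Normal]
    [IsCyclic (G ⧸ N)] : ∃ x : G, orderOf x = Nat.card (G ⧸ N) := by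
  obtain ⟨g, hg⟩ := IsCyclic.exists_ofOrder_eq_natCard (α := G ⧸ N)
  obtain ⟨x, rfl⟩ := QuotientGroup.mk'_surjective N g
  have hdvd : orderOf (QuotientGroup.mk' N x) ∣ orderOf x := orderOf_map_dvd _ x
  exact ⟨x ^ (orderOf x / orderOf (QuotientGroup.mk' N x)),
    hg ▸ orderOf_pow_orderOf_div (orderOf_pos x).ne' hdvd⟩

theorem eq_one_or_eq_of_mem_zpowers_of_orderOf_eq_two [Group G] {ε g : G} (hε : orderOf ε = 2)
    (hg : g ∈ zpowers ε) : g = 1 ∨ g = ε := by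
  classical
  have hfin : IsOfFinOrder ε := orderOf_pos_iff.mp (by omega)
  rw [hfin.mem_zpowers_iff_mem_range_orderOf, hε] at hg
  obtain ⟨a, ha, rfl⟩ : ∃ a < 2, ε ^ a = g := by simpa using hg
  interval_cases a <;> simp

theorem isCyclic_of_natCard_eq_two_mul_orderOf_of_odd [CommGroup G] [Finite G] (y : G)
    (hy : Nat.card G = 2 * orderOf y) (hodd : Odd (orderOf y)) : IsCyclic G := by
  have : Fact (Nat.Prime 2) := ⟨Nat.prime_two⟩
  obtain ⟨z, hz⟩ := exists_prime_orderOf_dvd_card' (G := G) 2 ⟨_, hy⟩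
  have hyz : orderOf (y * z) = orderOf y * 2 := by
    rw [← hz]
    exact (Commute.all y z).orderOf_mul_eq_mul_orderOf_of_coprime
      (hz ▸ Nat.coprime_two_right.mpr hodd)
  exact isCyclic_of_orderOf_eq_card (y * z) (by rw [hyz, hy, mul_comm])

theorem isCyclic_quotient_zpowers_of_not_isSquare [CommGroup G] [Finite G] {ε x : G}
    (hε : orderOf ε = 2) (hsq : ¬ IsSquare ε) (hx : Nat.card G = 2 * orderOf x) :
    IsCyclic (G ⧸ zpowers ε) := by
  have hcard : Nat.card (G ⧸ zpowers ε) * 2 = 2 * orderOf x := by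
    rw [← hx, card_eq_card_quotient_mul_card_subgroup (zpowers ε), Nat.card_zpowers, hε]
  set r := orderOf (x : G ⧸ zpowers ε)
  have hr : r ∣ orderOf x := orderOf_map_dvd (QuotientGroup.mk' _) x
  have hxr : x ^ r ∈ zpowers ε := by
    rw [← QuotientGroup.eq_one_iff, QuotientGroup.mk_pow]
    exact pow_orderOf_eq_one _
  by_cases hmem : ε ∈ zpowers x
  · obtain ⟨j, hj⟩ := hmem
    change x ^ j = ε at hj
    have hxr_eq : x ^ r = ε := by
      refine (eq_one_or_eq_of_mem_zpowers_of_orderOf_eq_two hε hxr).resolve_left fun h1 => ?_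
      have hrj : (r : ℤ) ∣ j := by
        refine orderOf_dvd_iff_zpow_eq_one.mpr ?_
        rw [← QuotientGroup.mk_zpow, hj, QuotientGroup.eq_one_iff]
        exact mem_zpowers ε
      rw [← hj, orderOf_dvd_iff_zpow_eq_one.mp ((Int.natCast_dvd_natCast.mpr
        (orderOf_dvd_of_pow_eq_one h1)).trans hrj), orderOf_one] at hε
      omega
    have hxr2 : orderOf x = 2 * r := by
      have := orderOf_pow_of_dvd (orderOf_pos _).ne' hr
      rw [hxr_eq, hε] at this
      exact Nat.eq_mul_of_div_eq_left hr this.symm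
    have hodd : Odd r := by
      rw [Nat.odd_iff, ← Nat.two_dvd_ne_zero]
      rintro ⟨t, ht⟩
      exact hsq ⟨x ^ t, by rw [← hxr_eq, ht, ← pow_two, ← pow_mul, mul_comm]⟩
    exact isCyclic_of_natCard_eq_two_mul_orderOf_of_odd _ (by omega) hodd
  · refine isCyclic_of_orderOf_eq_card (x : G ⧸ zpowers ε) (Nat.dvd_antisymm hr ?_ |>.trans ?_)
    · refine orderOf_dvd_of_pow_eq_one ?_
      refine (eq_one_or_eq_of_mem_zpowers_of_orderOf_eq_two hε hxr).resolve_right fun h => ?_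
      exact hmem (h ▸ pow_mem (mem_zpowers x) r)
    · omega

end GroupTheory

theorem ArithmeticFunction.carmichael_mul_mul_gcd_dvd_totient {a b : ℕ} (hab : a.Coprime b) :
    carmichael (a * b) * (carmichael a).gcd (carmichael b) ∣ φ (a * b) := by
  rw [carmichael_mul hab, Nat.totient_mul hab, mul_comm, Nat.gcd_mul_lcm]
  exact mul_dvd_mul (carmichael_dvd_totient a) (carmichael_dvd_totient b)

namespace ZMod

theorem not_four_dvd_of_isSquare_neg_one {n : ℕ} (hsq : IsSquare (-1 : ZMod n)) : ¬ 4 ∣ n :=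
  fun h => absurd (isSquare_neg_one_of_dvd h hsq) (by decide)

theorem four_dvd_carmichael_of_isSquare_neg_one {n : ℕ} (hn : 2 < n)
    (hsq : IsSquare (-1 : ZMod n)) : 4 ∣ carmichael n := by
  have : Fact (2 < n) := ⟨hn⟩
  obtain ⟨r, hr⟩ := hsq
  have hr2 : r ^ 2 = -1 := by rw [sq, ← hr]
  let s : (ZMod n)ˣ := Units.mkOfMulEqOne r (-r) (by rw [mul_neg, ← hr, neg_neg])
  have hord : orderOf r = 2 ^ 2 := by
    refine orderOf_eq_prime_pow (p := 2) ?_ ?_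
    · rw [pow_one, hr2]
      exact neg_one_ne_one
    · rw [pow_succ, pow_mul, pow_one, hr2, neg_one_sq]
  have hs : (s : ZMod n) = r := rfl
  rw [show (4 : ℕ) = 2 ^ 2 by norm_num, ← hord, ← hs, orderOf_units]
  exact orderOf_dvd_of_pow_eq_one (pow_carmichael _)

theorem isCyclic_units_or_exists_coprime_mul_eq {n : ℕ} (hn : 2 < n) (h4 : ¬ 4 ∣ n) :
    IsCyclic (ZMod n)ˣ ∨ ∃ a b : ℕ, a.Coprime b ∧ 2 < a ∧ 2 < b ∧ a * b = n := by
  obtain ⟨p, hp, hpn, hodd⟩ := (four_dvd_or_exists_odd_prime_and_dvd_of_two_lt hn).resolve_left h4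
  have hn0 : n ≠ 0 := by omega
  set k := n.factorization p
  set b := n / p ^ k
  have hab : p ^ k * b = n := ordProj_mul_ordCompl_eq_self n p
  have hk : 1 ≤ k := hp.factorization_pos_of_dvd hn0 hpn
  have hp3 : 2 < p := lt_of_le_of_ne hp.two_le (hodd.ne_two_of_dvd_nat dvd_rfl).symm
  by_cases hb : b ≤ 2
  · left
    rw [isCyclic_units_iff]
    refine .inr <| .inr <| .inr <| .inr ⟨p, k, hp, hodd, hk, ?_⟩
    interval_cases b <;> omega
  · exact .inr ⟨p ^ k, b, (coprime_ordCompl hp hn0).pow_left k,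
      lt_of_lt_of_le hp3 (le_self_pow (by omega) p), by omega, hab⟩

theorem isCyclic_units_of_isSquare_neg_one {n : ℕ} (hn : 2 < n) (hsq : IsSquare (-1 : ZMod n))
    (x : (ZMod n)ˣ) (hx : φ n = 2 * orderOf x) : IsCyclic (ZMod n)ˣ := by
  refine (isCyclic_units_or_exists_coprime_mul_eq hn
    (not_four_dvd_of_isSquare_neg_one hsq)).resolve_right ?_
  rintro ⟨a, b, hab, ha, hb, rfl⟩
  have h4 : 4 ∣ (carmichael a).gcd (carmichael b) := Nat.dvd_gcd
    (four_dvd_carmichael_of_isSquare_neg_one ha (isSquare_neg_one_of_dvd (dvd_mul_right a b) hsq))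
    (four_dvd_carmichael_of_isSquare_neg_one hb (isSquare_neg_one_of_dvd (dvd_mul_left b a) hsq))
  have hsmall : carmichael (a * b) * 4 ∣ 2 * orderOf x :=
    hx ▸ (mul_dvd_mul_left _ h4).trans (carmichael_mul_mul_gcd_dvd_totient hab)
  have hxc : orderOf x ∣ carmichael (a * b) := orderOf_dvd_of_pow_eq_one (pow_carmichael x)
  have hx0 := orderOf_pos x
  have hc0 : carmichael (a * b) ≠ 0 := by
    rintro h
    rw [h, zero_mul, zero_dvd_iff] at hsmall
    omega
  have := Nat.le_of_dvd (by omega) hsmall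
  have := Nat.le_of_dvd (by omega) hxc
  omega

end ZMod

/-- For n ≥ 3, U(n)/{±1} is cyclic iff U(n) has an element of order φ(n)/2. -/
theorem stmt_11 (n : ℕ) (hn : 3 ≤ n) :
    IsCyclic ((ZMod n)ˣ ⧸ Subgroup.zpowers (-1 : (ZMod n)ˣ)) ↔
      ∃ x : (ZMod n)ˣ, orderOf x = Nat.totient n / 2 := by
  have : Fact (2 < n) := ⟨hn⟩
  have : NeZero n := ⟨by omega⟩
  have hε : orderOf (-1 : (ZMod n)ˣ) = 2 :=
    orderOf_eq_prime neg_one_sq fun h => ZMod.neg_one_ne_one (by simpa using congrArg Units.val h)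
  have hcard : Nat.card (ZMod n)ˣ = φ n := by
    rw [Nat.card_eq_fintype_card, ZMod.card_units_eq_totient]
  constructor
  · intro _
    have hQ := card_eq_card_quotient_mul_card_subgroup (zpowers (-1 : (ZMod n)ˣ))
    rw [Nat.card_zpowers, hε, hcard] at hQ
    rw [hQ, Nat.mul_div_cancel _ two_pos]
    exact exists_orderOf_eq_natCard_quotient _
  · rintro ⟨x, hx⟩
    have hx2 : φ n = 2 * orderOf x := by rw [hx, Nat.mul_div_cancel' (totient_even hn).two_dvd]
    by_cases hsq : IsSquare (-1 : (ZMod n)ˣ)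
    · have := ZMod.isCyclic_units_of_isSquare_neg_one hn
        (by simpa using hsq.map (Units.coeHom (ZMod n))) x hx2
      exact isCyclic_of_surjective _ (QuotientGroup.mk'_surjective _)
    · exact isCyclic_quotient_zpowers_of_not_isSquare hε hsq (hcard.trans hx2)
end

section
/- Let p be a safe prime (p and (p-1)/2 both prime), and suppose the integer N coprime to p is divisible by at least (p-1)/2 primes q₁, ..., q_k all lying in the same class [i] ≠ [1] of U(p)/{±1}. Then N can be written as N = a₁·a₂···a_r with r ≥ 2, each a_j a nonunit integer, and all classes [a_j] equal in U(p)/{±1} (i.e., all a_j pairwise congruent to ±each other mod p). -/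
/-!
Write `m = (p - 1) / 2` and encode the class of `x` in `U(p)/{±1}` by `x ^ 2 ∈ ZMod p`,
which is legitimate because `x ^ 2 = y ^ 2 ↔ x = ± y` in a field. The common class
`h = q₀ ^ 2` of the primes is `≠ 1` and satisfies `h ^ m = 1` by Fermat, so it is a
primitive `m`-th root of unity and the class of the cofactor `c = N / ∏ qⱼ` is some `h ^ i`.
Choosing `1 ≤ s ≤ m ≤ k` with `i + (k - s) ≡ 1 (mod m)`, the factorization
`N = q₀ ⋯ q_{s-1} · (c · q_s ⋯ q_{k-1})` has all `s + 1 ≥ 2` factors in the class `h`.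
Every factor is then nonzero and `≠ ±1` mod `p`, hence a nonunit.
-/

def sqMod (p : ℕ) : ℤ →* ZMod p :=
  (powMonoidHom 2).comp (Int.castRingHom (ZMod p)).toMonoidHom

lemma sqMod_apply (p : ℕ) (x : ℤ) : sqMod p x = (x : ZMod p) ^ 2 := rfl

lemma sqMod_eq_sqMod_iff {p : ℕ} [Fact p.Prime] {a b : ℤ} :
    sqMod p a = sqMod p b ↔ a ≡ b [ZMOD p] ∨ a ≡ -b [ZMOD p] := by
  simp only [sqMod_apply, sq_eq_sq_iff_eq_or_eq_neg, ← Int.cast_neg,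
    ZMod.intCast_eq_intCast_iff]

lemma one_lt_abs_of_sqMod {p : ℕ} {x : ℤ} (h0 : sqMod p x ≠ 0) (h1 : sqMod p x ≠ 1) :
    1 < |x| := by
  by_contra hx
  obtain rfl | rfl | rfl : x = 0 ∨ x = 1 ∨ x = -1 := by
    rcases abs_cases x with ⟨_, _⟩ | ⟨_, _⟩ <;> omega
  all_goals simp [sqMod_apply] at h0 h1

lemma intCast_ne_zero_of_isCoprime {p : ℕ} (hp : p ≠ 1) {x : ℤ} (hx : IsCoprime x p) :
    (x : ZMod p) ≠ 0 := by
  rw [Ne, ZMod.intCast_zmod_eq_zero_iff_dvd]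
  intro hdvd
  have := Int.isUnit_iff.mp (hx.isUnit_of_dvd' hdvd dvd_rfl)
  omega

lemma ZMod.sq_pow_sub_one_div_two_eq_one {p : ℕ} [Fact p.Prime] (hp : p ≠ 2) {y : ZMod p} (hy : y ≠ 0) :
    (y ^ 2) ^ ((p - 1) / 2) = 1 := by
  have h2 : 2 * ((p - 1) / 2) = p - 1 :=
    Nat.mul_div_cancel' (Nat.Prime.even_sub_one Fact.out hp).two_dvd
  rw [← pow_mul, h2, ZMod.pow_card_sub_one_eq_one hy]

lemma isPrimitiveRoot_sq_of_safePrime {p : ℕ} [Fact p.Prime] (hm : ((p - 1) / 2).Prime)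
    {x : ZMod p} (hx0 : x ≠ 0) (hx1 : x ^ 2 ≠ 1) : IsPrimitiveRoot (x ^ 2) ((p - 1) / 2) := by
  have hp : p ≠ 2 := by rintro rfl; exact Nat.not_prime_zero hm
  have : Fact ((p - 1) / 2).Prime := ⟨hm⟩
  rw [← orderOf_eq_prime (ZMod.sq_pow_sub_one_div_two_eq_one hp hx0) hx1]
  exact IsPrimitiveRoot.orderOf _

lemma exists_pow_mul_pow_sub_eq_self {M : Type*} [Monoid M] {h : M} {m : ℕ} (hm : h ^ m = 1)
    (hm2 : 2 ≤ m) (i : ℕ) {k : ℕ} (hmk : m ≤ k) :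
    ∃ s, 1 ≤ s ∧ s ≤ k ∧ h ^ i * h ^ (k - s) = h := by
  have hdiv := Nat.div_add_mod (i + k - 2) m
  have hlt := Nat.mod_lt (i + k - 2) (by omega : 0 < m)
  refine ⟨(i + k - 2) % m + 1, by omega, by omega, ?_⟩
  rw [← pow_add, show i + (k - ((i + k - 2) % m + 1)) = m * ((i + k - 2) / m) + 1 by omega,
    pow_succ, pow_mul, hm, one_pow, one_mul]

/-- Keep the first `s` entries of `L` and merge `c` with the remaining ones. -/
lemma List.exists_regroup_map_eq {α M : Type*} [CommMonoid α] [Monoid M] (φ : α →* M) {h : M}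
    (L : List α) (hL : ∀ x ∈ L, φ x = h) (c : α) {s : ℕ} (hs : s ≤ L.length)
    (hc : φ c * h ^ (L.length - s) = h) :
    ∃ A : List α, A.prod = c * L.prod ∧ A.length = s + 1 ∧ ∀ x ∈ A, φ x = h := by
  refine ⟨L.take s ++ [c * (L.drop s).prod], ?_, by simp [hs], ?_⟩
  · rw [List.prod_append, List.prod_singleton, ← L.prod_take_mul_prod_drop s]
    ac_rfl
  · have hdrop : φ (L.drop s).prod = h ^ (L.length - s) := by
      rw [map_list_prod, List.prod_eq_pow_card _ h, List.length_map, List.length_drop]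
      intro x hx
      obtain ⟨y, hy, rfl⟩ := List.mem_map.mp hx
      exact hL y (List.mem_of_mem_drop hy)
    simp only [List.mem_append, List.mem_singleton]
    rintro x (hx | rfl)
    · exact hL x (List.mem_of_mem_take hx)
    · rwa [map_mul, hdrop]

theorem stmt_15_general (p : ℕ) (hp : Nat.Prime p) (hsafe : Nat.Prime ((p - 1) / 2))
    (N : ℤ) (hN : IsCoprime N (p : ℤ))
    (k : ℕ) (hk : (p - 1) / 2 ≤ k) (q : Fin k → ℕ)
    (hdvd : (∏ j, (q j : ℤ)) ∣ N)
    (hsame : ∀ i j, (q i : ℤ) ≡ (q j : ℤ) [ZMOD (p : ℤ)] ∨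
      (q i : ℤ) ≡ -(q j : ℤ) [ZMOD (p : ℤ)])
    (hne1 : ∀ j, ¬((q j : ℤ) ≡ 1 [ZMOD (p : ℤ)] ∨ (q j : ℤ) ≡ -1 [ZMOD (p : ℤ)])) :
    ∃ r : ℕ, 2 ≤ r ∧ ∃ a : Fin r → ℤ, N = ∏ j, a j ∧ (∀ j, 1 < |a j|) ∧
      ∀ i j, a i ≡ a j [ZMOD (p : ℤ)] ∨ a i ≡ -(a j) [ZMOD (p : ℤ)] := by
  have : Fact p.Prime := ⟨hp⟩
  have hnz : ∀ x : ℤ, x ∣ N → (x : ZMod p) ≠ 0 := fun x hx =>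
    intCast_ne_zero_of_isCoprime hp.ne_one (hN.of_isCoprime_of_dvd_left hx)
  obtain ⟨c, rfl⟩ := hdvd
  set L := List.ofFn fun j => (q j : ℤ)
  have hLprod : L.prod = ∏ j, (q j : ℤ) := List.prod_ofFn
  have hm2 := hsafe.two_le
  let g : ℤ := q ⟨0, by omega⟩
  have hL : ∀ x ∈ L, sqMod p x = sqMod p g := by
    simpa [L] using fun j => sqMod_eq_sqMod_iff.mpr (hsame j _)
  have hg0 : (g : ZMod p) ≠ 0 :=
    hnz g ((Finset.dvd_prod_of_mem _ (Finset.mem_univ _)).mul_right c)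
  have hg1 : sqMod p g ≠ 1 := fun h1 => hne1 _ (sqMod_eq_sqMod_iff.mp (by simpa using h1))
  have hprim : IsPrimitiveRoot (sqMod p g) ((p - 1) / 2) :=
    isPrimitiveRoot_sq_of_safePrime hsafe hg0 hg1
  have : NeZero ((p - 1) / 2) := ⟨by omega⟩
  obtain ⟨i, -, hi⟩ := hprim.eq_pow_of_pow_eq_one
    (ZMod.sq_pow_sub_one_div_two_eq_one (by rintro rfl; simp at hm2) (hnz c (dvd_mul_left c _)))
  obtain ⟨s, hs1, hsk, hs⟩ := exists_pow_mul_pow_sub_eq_self hprim.pow_eq_one hm2 i hk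
  obtain ⟨A, hAprod, hAlen, hA⟩ := L.exists_regroup_map_eq (sqMod p) hL c
    (by simpa [L] using hsk) (by rwa [sqMod_apply p c, ← hi, List.length_ofFn])
  refine ⟨A.length, by omega, A.get, ?_, fun j => ?_, fun i j => ?_⟩
  · rw [← List.prod_ofFn (f := A.get), List.ofFn_get, hAprod, hLprod, mul_comm]
  · have hj := hA _ (A.get_mem j)
    exact one_lt_abs_of_sqMod (hj ▸ pow_ne_zero 2 hg0) (hj ▸ hg1)
  · exact sqMod_eq_sqMod_iff.mp ((hA _ (A.get_mem i)).trans (hA _ (A.get_mem j)).symm)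

/-- Let p be a safe prime and N an integer coprime to p divisible by at least
(p-1)/2 primes q₁, ..., q_k all lying in the same class [i] ≠ [1] of
U(p)/{±1}. Then N has a nontrivial factorization N = a₁ ⋯ a_r (r ≥ 2, each
a_j a nonunit) with all factors pairwise congruent to ± each other mod p. -/
theorem stmt_15 (p : ℕ) (hp : Nat.Prime p) (hsafe : Nat.Prime ((p - 1) / 2))
    (N : ℤ) (hN : IsCoprime N (p : ℤ)) (hN1 : 1 < |N|)
    (k : ℕ) (hk : (p - 1) / 2 ≤ k) (q : Fin k → ℕ)
    (hq : ∀ j, Nat.Prime (q j))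
    (hdvd : (∏ j, (q j : ℤ)) ∣ N)
    (hsame : ∀ i j, (q i : ℤ) ≡ (q j : ℤ) [ZMOD (p : ℤ)] ∨
      (q i : ℤ) ≡ -(q j : ℤ) [ZMOD (p : ℤ)])
    (hne1 : ∀ j, ¬((q j : ℤ) ≡ 1 [ZMOD (p : ℤ)] ∨ (q j : ℤ) ≡ -1 [ZMOD (p : ℤ)])) :
    ∃ r : ℕ, 2 ≤ r ∧ ∃ a : Fin r → ℤ, N = ∏ j, a j ∧ (∀ j, 1 < |a j|) ∧
      ∀ i j, a i ≡ a j [ZMOD (p : ℤ)] ∨ a i ≡ -(a j) [ZMOD (p : ℤ)] :=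
  stmt_15_general p hp hsafe N hN k hk q hdvd hsame hne1
end

section
/- Let p be a prime and t a positive integer. The integer x = p·t admits a nontrivial factorization x = a₁···a_r (r ≥ 2, each |a_j| > 1) with all a_i ≡ a_j (mod p) if and only if p divides t... Contrapositive form: if p ∤ t, then in any factorization pt = a·b with |a|,|b| > 1 and a ≡ b (mod p), we reach a contradiction; hence pt is a τ_(p)-atom. -/
/-!
If a prime `p` divides a product whose factors are pairwise congruent mod `p`, it divides one
factor and hence all of them, so `p ^ r` divides the product. For `r ≥ 2` and the product `p t`
this forces `p ∣ t`. Conversely, if `t = p s` then `p t = p · (p s)` is such a factorization,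
both factors being `≡ 0 (mod p)`.
-/

theorem Int.pow_card_dvd_prod_of_modEq {ι : Type*} [Fintype ι] {p : ℤ} (hp : Prime p)
    {a : ι → ℤ} (hcong : ∀ i j, a i ≡ a j [ZMOD p]) (hdvd : p ∣ ∏ i, a i) :
    p ^ Fintype.card ι ∣ ∏ i, a i := by
  obtain ⟨i, -, hi⟩ := hp.exists_mem_finset_dvd hdvd
  have hall : ∀ j, p ∣ a j := fun j => (hcong i j).dvd_iff.mp hi
  rw [← Finset.card_univ, ← Finset.prod_const]
  exact Finset.prod_dvd_prod_of_dvd _ _ fun j _ => hall j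

/-- For p prime and t > 0, the integer pt admits a nontrivial factorization
pt = a₁ ⋯ a_r (r ≥ 2, each |a_j| > 1) with all factors pairwise congruent
mod p if and only if p divides t. -/
theorem stmt_19 (p t : ℕ) (hp : Nat.Prime p) (ht : 0 < t) :
    (∃ r : ℕ, 2 ≤ r ∧ ∃ a : Fin r → ℤ, (p : ℤ) * t = ∏ j, a j ∧
      (∀ j, 1 < |a j|) ∧ ∀ i j, a i ≡ a j [ZMOD (p : ℤ)]) ↔ p ∣ t := by
  have hpz : Prime (p : ℤ) := Nat.prime_iff_prime_int.mp hp
  constructor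
  · rintro ⟨r, hr, a, hprod, -, hcong⟩
    have hpow : (p : ℤ) ^ r ∣ p * t := by
      rw [hprod]
      simpa using Int.pow_card_dvd_prod_of_modEq hpz hcong (hprod ▸ dvd_mul_right _ _)
    have hsq : (p : ℤ) * p ∣ p * t := (pow_two (p : ℤ)) ▸ (pow_dvd_pow _ hr).trans hpow
    exact Int.natCast_dvd_natCast.mp ((mul_dvd_mul_iff_left hpz.ne_zero).mp hsq)
  · rintro ⟨s, rfl⟩
    have hs : 1 ≤ (s : ℤ) := by exact_mod_cast Nat.pos_of_mul_pos_left ht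
    have hp2 : 2 ≤ (p : ℤ) := by exact_mod_cast hp.two_le
    refine ⟨2, le_rfl, ![(p : ℤ), p * s], by simp, ?_, ?_⟩
    · simp only [Fin.forall_fin_two, Matrix.cons_val_zero, Matrix.cons_val_one]
      constructor <;> rw [abs_of_nonneg (by positivity)] <;> nlinarith
    · have hzero : ∀ k, ![(p : ℤ), p * s] k ≡ 0 [ZMOD p] := by
        simp [Fin.forall_fin_two, Int.modEq_zero_iff_dvd]
      exact fun i j => (hzero i).trans (hzero j).symm
end
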